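/- Let α ∈ (0,1] and δ > 0. There exist a finite probability space, a 1-Lipschitz function f : ℝ → ℝ, and real-valued random variables X (for the agent) and Y (for the expert) taking values in ℝ, such that the Wasserstein-1 distance between the laws of X and Y is at most δ, yet ρ_α[f(X)] − ρ_α[f(Y)] ≥ δ/α, where ρ_α is conditional value-at-risk at level α. -/

import Mathlib

/-!
Put mass `α` at `δ / α` and the rest at `0`, against the point mass at `0`. Moving the atom costs
`α · δ / α = δ`, so the two laws are `δ`-close in Wasserstein-1 distance. But CVaR at level `α`
averages exactly the upper `α`-tail, which is the single atom `δ / α` for the first law and `0`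
for the second.
-/

open Finset

noncomputable section

variable {ι : Type*} [Fintype ι]

/-- Kantorovich–Rubinstein dual form of the Wasserstein-1 distance. -/
def wasserstein1 (p X Y : ι → ℝ) : ℝ :=
  sSup {w : ℝ | ∃ g : ℝ → ℝ, (∀ a b : ℝ, |g a - g b| ≤ |a - b|) ∧
    w = |(∑ i, p i * g (X i)) - ∑ i, p i * g (Y i)|}

/-- The Rockafellar–Uryasev objective, whose infimum over `ν` is CVaR at level `α`. -/
def cvarObjective (α : ℝ) (p Z : ι → ℝ) (ν : ℝ) : ℝ :=
  ν + (1 / α) * ∑ i, p i * max (Z i - ν) 0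

def cvar (α : ℝ) (p Z : ι → ℝ) : ℝ :=
  ⨅ ν : ℝ, cvarObjective α p Z ν

section Wasserstein

variable {p : ι → ℝ} (X Y : ι → ℝ)

/-- The identity coupling bounds the dual form. -/
theorem abs_sum_sub_le_sum_abs_sub (hp : ∀ i, 0 ≤ p i) {g : ℝ → ℝ}
    (hg : ∀ a b : ℝ, |g a - g b| ≤ |a - b|) :
    |(∑ i, p i * g (X i)) - ∑ i, p i * g (Y i)| ≤ ∑ i, p i * |X i - Y i| :=
  calc |(∑ i, p i * g (X i)) - ∑ i, p i * g (Y i)|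
      = |∑ i, p i * (g (X i) - g (Y i))| := by simp only [mul_sub, sum_sub_distrib]
    _ ≤ ∑ i, |p i * (g (X i) - g (Y i))| := abs_sum_le_sum_abs _ _
    _ ≤ ∑ i, p i * |X i - Y i| := by
      gcongr with i
      rw [abs_mul, abs_of_nonneg (hp i)]
      exact mul_le_mul_of_nonneg_left (hg _ _) (hp i)

theorem wasserstein1_le_sum_abs_sub (hp : ∀ i, 0 ≤ p i) :
    wasserstein1 p X Y ≤ ∑ i, p i * |X i - Y i| := by
  refine Real.sSup_le ?_ (sum_nonneg fun i _ => mul_nonneg (hp i) (abs_nonneg _))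
  rintro w ⟨g, hg, rfl⟩
  exact abs_sum_sub_le_sum_abs_sub X Y hp hg

end Wasserstein

section CVaR

variable {α : ℝ} {p : ι → ℝ} {Z : ι → ℝ}

theorem sum_mul_le_cvarObjective (hα : α ∈ Set.Ioc 0 1) (hp : ∀ i, 0 ≤ p i)
    (hp1 : ∑ i, p i = 1) (ν : ℝ) : ∑ i, p i * Z i ≤ cvarObjective α p Z ν := by
  have hα1 : 1 ≤ 1 / α := by rw [le_div_iff₀ hα.1]; linarith [hα.2]
  have hpos : 0 ≤ ∑ i, p i * max (Z i - ν) 0 :=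
    sum_nonneg fun i _ => mul_nonneg (hp i) (le_max_right _ _)
  calc ∑ i, p i * Z i = ν + ∑ i, p i * (Z i - ν) := by
        simp only [mul_sub, sum_sub_distrib, ← sum_mul, hp1, one_mul, add_sub_cancel]
    _ ≤ ν + ∑ i, p i * max (Z i - ν) 0 := by
        gcongr with i
        · exact hp i
        · exact le_max_left _ _
    _ ≤ cvarObjective α p Z ν := by
        unfold cvarObjective
        nlinarith

theorem cvar_le_cvarObjective (hα : α ∈ Set.Ioc 0 1) (hp : ∀ i, 0 ≤ p i)
    (hp1 : ∑ i, p i = 1) (ν : ℝ) : cvar α p Z ≤ cvarObjective α p Z ν :=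
  ciInf_le ⟨_, Set.forall_mem_range.2 (sum_mul_le_cvarObjective hα hp hp1)⟩ ν

theorem cvar_le_of_forall_le (hα : α ∈ Set.Ioc 0 1) (hp : ∀ i, 0 ≤ p i)
    (hp1 : ∑ i, p i = 1) {c : ℝ} (hZ : ∀ i, Z i ≤ c) : cvar α p Z ≤ c := by
  refine (cvar_le_cvarObjective hα hp hp1 c).trans_eq ?_
  simp [cvarObjective, hZ]

theorem le_cvar_of_le_weight (hα : 0 < α) (hp : ∀ i, 0 ≤ p i) {j : ι} (hj : α ≤ p j) :
    Z j ≤ cvar α p Z := by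
  refine le_ciInf fun ν => ?_
  have hatom : α * max (Z j - ν) 0 ≤ ∑ i, p i * max (Z i - ν) 0 :=
    (mul_le_mul_of_nonneg_right hj (le_max_right _ _)).trans <|
      single_le_sum (f := fun i => p i * max (Z i - ν) 0)
        (fun i _ => mul_nonneg (hp i) (le_max_right _ _)) (mem_univ j)
  have htail : max (Z j - ν) 0 ≤ (1 / α) * ∑ i, p i * max (Z i - ν) 0 := by
    rw [one_div, le_inv_mul_iff₀ hα]
    exact hatom
  unfold cvarObjective
  linarith [le_max_left (Z j - ν) 0]

end CVaR

end

/-- Worst-case risk gap: for any α ∈ (0,1] and δ > 0, there is a finite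
probability space, a 1-Lipschitz cost f, and random variables X, Y whose laws
are within Wasserstein-1 distance δ, yet CVaR_α of f(X) exceeds CVaR_α of f(Y)
by at least δ/α. -/
theorem wasserstein_close_but_cvar_far (α δ : ℝ)
    (hα : α ∈ Set.Ioc (0:ℝ) 1) (hδ : 0 < δ) :
    ∃ (n : ℕ) (p : Fin n → ℝ) (f : ℝ → ℝ) (X Y : Fin n → ℝ),
      (∀ i, 0 ≤ p i) ∧ (∑ i, p i = 1) ∧
      (∀ a b : ℝ, |f a - f b| ≤ |a - b|) ∧
      sSup {w : ℝ | ∃ g : ℝ → ℝ, (∀ a b : ℝ, |g a - g b| ≤ |a - b|) ∧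
          w = |(∑ i, p i * g (X i)) - ∑ i, p i * g (Y i)|} ≤ δ ∧
      (⨅ ν : ℝ, ν + (1/α) * ∑ i, p i * max (f (X i) - ν) 0) -
        (⨅ ν : ℝ, ν + (1/α) * ∑ i, p i * max (f (Y i) - ν) 0) ≥ δ / α := by
  set p : Fin 2 → ℝ := ![α, 1 - α]
  set X : Fin 2 → ℝ := ![δ / α, 0]
  have hp : ∀ i, 0 ≤ p i := by
    intro i
    fin_cases i <;> simp [p] <;> linarith [hα.1, hα.2]
  have hp1 : ∑ i, p i = 1 := by simp [p]
  have hW : wasserstein1 p X 0 ≤ δ :=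
    (wasserstein1_le_sum_abs_sub X 0 hp).trans_eq <| by
      simp [p, X, abs_of_pos (div_pos hδ hα.1), mul_div_cancel₀ _ hα.1.ne']
  have hX : δ / α ≤ cvar α p X := le_cvar_of_le_weight (Z := X) (j := 0) hα.1 hp le_rfl
  have hY : cvar α p (0 : Fin 2 → ℝ) ≤ 0 := cvar_le_of_forall_le hα hp hp1 fun _ => le_rfl
  refine ⟨2, p, id, X, 0, hp, hp1, fun _ _ => le_rfl, hW, ?_⟩
  change cvar α p X - cvar α p 0 ≥ δ / α
  linarith
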